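/- Let X, Y be strings with δ_E(X, Y) ≤ k, and suppose there is a decomposition X = X_0 · Q · X_2 · Q · ... · X_{t−2} · Q · X_t and Y = Y_0 · Q · Y_2 · Q · ... · Y_{t−2} · Q · Y_t (with t even) such that δ_E(X, Y) = Σ_{i even} δ_E(X_i, Y_i), and for each even i at least one of X_i, Y_i is a power of Q. Then for X' = X_0 X_2 Q X_4 Q ··· Q X_{t−2} Q² X_t (shifting one copy of Q from after X_0 to before X_t) we have δ_E(X', Y) ≤ δ_E(X, Y). -/

import Mathlib

/-- Cost structure of the Levenshtein distance (removed from Mathlib; restated). -/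
structure Levenshtein.Cost (α β δ : Type*) where
  delete : α → δ
  insert : β → δ
  substitute : α → β → δ

/-- Unit costs (removed from Mathlib; restated). -/
def Levenshtein.defaultCost {α : Type*} [DecidableEq α] : Levenshtein.Cost α α ℕ where
  delete _ := 1
  insert _ := 1
  substitute a b := if a = b then 0 else 1

/-- Levenshtein distance (removed from Mathlib; restated by its defining recursion). -/
def levenshtein {α β δ : Type*} [AddZeroClass δ] [Min δ] (C : Levenshtein.Cost α β δ) :
    List α → List β → δ
  | [], ys => (ys.map C.insert).sum
  | x :: xs, [] => C.delete x + levenshtein C xs []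
  | x :: xs, y :: ys => min (C.delete x + levenshtein C xs (y :: ys))
      (min (C.insert y + levenshtein C (x :: xs) ys) (C.substitute x y + levenshtein C xs ys))

/-- Edit (Levenshtein) distance between two strings, with unit costs. -/
def editDist {α : Type*} [DecidableEq α] (A B : List α) : ℕ :=
  levenshtein Levenshtein.defaultCost A B

/-- The fragment \`S[i..j)\` of a string \`S\`. -/
def seg {α : Type*} (S : List α) (i j : ℕ) : List α :=
  (S.drop i).take (j - i)

/-- \`Q^a\`: the \`a\`-fold concatenation of \`Q\`. -/
def pow {α : Type*} (Q : List α) (a : ℕ) : List α :=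
  (List.replicate a Q).flatten

section Aux

variable {α : Type*} [DecidableEq α]

@[simp] lemma levenshtein_nil_nil {β δ : Type*} [AddZeroClass δ] [Min δ]
    (C : Levenshtein.Cost α β δ) : levenshtein C [] [] = 0 := by
  simp [levenshtein]

@[simp] lemma levenshtein_nil_cons {β δ : Type*} [AddZeroClass δ] [Min δ]
    (C : Levenshtein.Cost α β δ) (y : β) (ys : List β) :
    levenshtein C [] (y :: ys) = C.insert y + levenshtein C [] ys := by
  simp [levenshtein]

@[simp] lemma levenshtein_cons_nil {β δ : Type*} [AddZeroClass δ] [Min δ]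
    (C : Levenshtein.Cost α β δ) (x : α) (xs : List α) :
    levenshtein C (x :: xs) [] = C.delete x + levenshtein C xs [] := by
  simp [levenshtein]

lemma levenshtein_cons_cons {β δ : Type*} [AddZeroClass δ] [Min δ]
    (C : Levenshtein.Cost α β δ) (x : α) (xs : List α) (y : β) (ys : List β) :
    levenshtein C (x :: xs) (y :: ys) = min (C.delete x + levenshtein C xs (y :: ys))
      (min (C.insert y + levenshtein C (x :: xs) ys) (C.substitute x y + levenshtein C xs ys)) := by
  simp [levenshtein]

@[simp] lemma defaultCost_delete (a : α) :
    (Levenshtein.defaultCost : Levenshtein.Cost α α ℕ).delete a = 1 := rfl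

@[simp] lemma defaultCost_insert (a : α) :
    (Levenshtein.defaultCost : Levenshtein.Cost α α ℕ).insert a = 1 := rfl

@[simp] lemma defaultCost_substitute (a b : α) :
    (Levenshtein.defaultCost : Levenshtein.Cost α α ℕ).substitute a b = if a = b then 0 else 1 := rfl

lemma ed_nil_nil : editDist ([] : List α) [] = 0 := by simp [editDist]

lemma ed_ins (A : List α) (y : α) (B : List α) :
    editDist A (y :: B) ≤ 1 + editDist A B := by
  cases A with
  | nil => simp [editDist]
  | cons x xs =>
    unfold editDist
    rw [levenshtein_cons_cons]
    exact le_trans (min_le_of_right_le (min_le_left _ _)) (by simp [editDist])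

lemma ed_del (x : α) (A B : List α) :
    editDist (x :: A) B ≤ 1 + editDist A B := by
  cases B with
  | nil => simp [editDist]
  | cons y ys =>
    unfold editDist
    rw [levenshtein_cons_cons]
    exact le_trans (min_le_left _ _) (by simp [editDist])

lemma ed_sub (x : α) (A : List α) (y : α) (B : List α) :
    editDist (x :: A) (y :: B) ≤ (if x = y then 0 else 1) + editDist A B := by
  unfold editDist
  rw [levenshtein_cons_cons]
  exact min_le_of_right_le (min_le_right _ _)

/-- Subadditivity of edit distance under concatenation. -/
lemma ed_append (A B C D : List α) :
    editDist (A ++ C) (B ++ D) ≤ editDist A B + editDist C D := by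
  induction A generalizing B with
  | nil =>
    induction B with
    | nil => simp
    | cons b B ihB =>
      simp only [List.nil_append] at *
      calc editDist C (b :: (B ++ D)) ≤ 1 + editDist C (B ++ D) := ed_ins _ _ _
        _ ≤ 1 + (editDist [] B + editDist C D) := by omega
        _ = editDist ([] : List α) (b :: B) + editDist C D := by
            simp [editDist]; ring
  | cons a A ihA =>
    induction B with
    | nil =>
      simp only [List.nil_append, List.cons_append] at *
      calc editDist (a :: (A ++ C)) D ≤ 1 + editDist (A ++ C) D := ed_del _ _ _
        _ ≤ 1 + (editDist A [] + editDist C D) := by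
            have := ihA ([] : List α); simp at this; omega
        _ = editDist (a :: A) ([] : List α) + editDist C D := by
            simp [editDist]; ring
    | cons b B ihB =>
      have h1 : editDist ((a :: A) ++ C) ((b :: B) ++ D) ≤
          (1 + editDist A (b :: B)) + editDist C D := by
        calc editDist ((a :: A) ++ C) ((b :: B) ++ D)
            ≤ 1 + editDist (A ++ C) ((b :: B) ++ D) := ed_del _ _ _
          _ ≤ (1 + editDist A (b :: B)) + editDist C D := by
              have := ihA (b :: B); omega
      have h2 : editDist ((a :: A) ++ C) ((b :: B) ++ D) ≤
          (1 + editDist (a :: A) B) + editDist C D := by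
        calc editDist ((a :: A) ++ C) ((b :: B) ++ D)
            ≤ 1 + editDist ((a :: A) ++ C) (B ++ D) := ed_ins _ _ _
          _ ≤ (1 + editDist (a :: A) B) + editDist C D := by omega
      have h3 : editDist ((a :: A) ++ C) ((b :: B) ++ D) ≤
          ((if a = b then 0 else 1) + editDist A B) + editDist C D := by
        calc editDist ((a :: A) ++ C) ((b :: B) ++ D)
            ≤ (if a = b then 0 else 1) + editDist (A ++ C) (B ++ D) := ed_sub _ _ _ _
          _ ≤ ((if a = b then 0 else 1) + editDist A B) + editDist C D := by
              have := ihA B; omega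
      have hmin : editDist (a :: A) (b :: B) =
          min (1 + editDist A (b :: B))
            (min (1 + editDist (a :: A) B)
              ((if a = b then 0 else 1) + editDist A B)) := by
        simp [editDist, levenshtein_cons_cons, Levenshtein.defaultCost]
      rw [hmin]
      rcases le_total (1 + editDist A (b :: B))
          (min (1 + editDist (a :: A) B) ((if a = b then 0 else 1) + editDist A B)) with h | h
      · rw [min_eq_left h]; exact h1
      · rw [min_eq_right h]
        rcases le_total (1 + editDist (a :: A) B)
            ((if a = b then 0 else 1) + editDist A B) with h' | h'
        · rw [min_eq_left h']; exact h2
        · rw [min_eq_right h']; exact h3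

lemma ed_self (A : List α) : editDist A A = 0 := by
  induction A with
  | nil => simp [editDist]
  | cons a A ih =>
    have := ed_sub a A a A
    simp [ih] at this
    omega

lemma ed_prefix (P A B : List α) : editDist (P ++ A) (P ++ B) ≤ editDist A B := by
  have := ed_append P P A B
  simp [ed_self] at this
  exact this

lemma ed_suffix (A B P : List α) : editDist (A ++ P) (B ++ P) ≤ editDist A B := by
  have := ed_append A B P P
  simp [ed_self] at this
  exact this

lemma pow_comm (Q : List α) (j : ℕ) : pow Q j ++ Q = Q ++ pow Q j := by
  induction j with
  | zero => simp [pow]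
  | succ n ih =>
    simp only [pow, List.replicate_succ, List.flatten_cons] at *
    rw [List.append_assoc, ih]

/-- Cancellation: shifting one copy of `Q` across a block, when one side is a
power of `Q`. -/
lemma ed_shift (Q M N : List α)
    (h : (∃ j, M = pow Q j) ∨ (∃ j, N = pow Q j)) :
    editDist (M ++ Q) (Q ++ N) ≤ editDist M N := by
  rcases h with ⟨j, rfl⟩ | ⟨j, rfl⟩
  · rw [pow_comm]
    exact ed_prefix _ _ _
  · rw [← pow_comm]
    exact ed_suffix _ _ _

lemma join_intersperse_cons (Q a : List α) (l : List (List α)) (h : l ≠ []) :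
    (List.intersperse Q (a :: l)).flatten = a ++ (Q ++ (List.intersperse Q l).flatten) := by
  cases l with
  | nil => exact absurd rfl h
  | cons b t => simp [List.intersperse]

/-- The key blockwise estimate. -/
lemma ed_blocks (Q : List α) (Ms : List (List α)) :
    ∀ (Ns : List (List α)), Ms.length = Ns.length →
    ∀ (Xt Yt : List α),
    (∀ pr ∈ List.zip (Ms ++ [Xt]) (Ns ++ [Yt]),
      (∃ j : ℕ, pr.1 = pow Q j) ∨ (∃ j : ℕ, pr.2 = pow Q j)) →
    editDist ((List.intersperse Q (Ms ++ [Q ++ Xt])).flatten)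
        (Q ++ (List.intersperse Q (Ns ++ [Yt])).flatten) ≤
      (List.zipWith editDist (Ms ++ [Xt]) (Ns ++ [Yt])).sum := by
  induction Ms with
  | nil =>
    intro Ns hlen Xt Yt hpow
    cases Ns with
    | nil =>
      simpa using ed_prefix Q Xt Yt
    | cons _ _ => simp at hlen
  | cons M Ms ih =>
    intro Ns hlen Xt Yt hpow
    cases Ns with
    | nil => simp at hlen
    | cons N Ns =>
      simp only [List.length_cons, Nat.add_right_cancel_iff] at hlen
      have hMs : Ms ++ [Q ++ Xt] ≠ [] := by simp
      have hNs : Ns ++ [Yt] ≠ [] := by simp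
      rw [show (M :: Ms) ++ [Q ++ Xt] = M :: (Ms ++ [Q ++ Xt]) from rfl,
        join_intersperse_cons Q M _ hMs,
        show (N :: Ns) ++ [Yt] = N :: (Ns ++ [Yt]) from rfl,
        join_intersperse_cons Q N _ hNs]
      have hhead : (∃ j, M = pow Q j) ∨ (∃ j, N = pow Q j) := by
        have := hpow (M, N) (by simp [List.zip_cons_cons])
        exact this
      have hrest := ih Ns hlen Xt Yt (fun pr hpr => hpow pr (by
        simp only [List.cons_append, List.zip_cons_cons, List.mem_cons]
        right; exact hpr))
      calc editDist (M ++ (Q ++ (List.intersperse Q (Ms ++ [Q ++ Xt])).flatten))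
            (Q ++ (N ++ (Q ++ (List.intersperse Q (Ns ++ [Yt])).flatten)))
          = editDist ((M ++ Q) ++ (List.intersperse Q (Ms ++ [Q ++ Xt])).flatten)
            ((Q ++ N) ++ (Q ++ (List.intersperse Q (Ns ++ [Yt])).flatten)) := by
            simp [List.append_assoc]
        _ ≤ editDist (M ++ Q) (Q ++ N) +
              editDist ((List.intersperse Q (Ms ++ [Q ++ Xt])).flatten)
                (Q ++ (List.intersperse Q (Ns ++ [Yt])).flatten) := ed_append _ _ _ _
        _ ≤ editDist M N + (List.zipWith editDist (Ms ++ [Xt]) (Ns ++ [Yt])).sum := by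
            have := ed_shift Q M N hhead
            omega
        _ = (List.zipWith editDist ((M :: Ms) ++ [Xt]) ((N :: Ns) ++ [Yt])).sum := by
            simp

end Aux

theorem stmt_10 {α : Type*} [DecidableEq α] (Q X0 Xt Y0 Yt : List α)
    (Ms Ns : List (List α)) (k : ℕ) (hQ : Q ≠ [])
    (hlen : Ms.length = Ns.length)
    (hk : editDist ((List.intersperse Q (X0 :: Ms ++ [Xt])).flatten)
        ((List.intersperse Q (Y0 :: Ns ++ [Yt])).flatten) ≤ k)
    (hsum : editDist ((List.intersperse Q (X0 :: Ms ++ [Xt])).flatten)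
        ((List.intersperse Q (Y0 :: Ns ++ [Yt])).flatten) =
      (List.zipWith editDist (X0 :: Ms ++ [Xt]) (Y0 :: Ns ++ [Yt])).sum)
    (hpow : ∀ pr ∈ List.zip (X0 :: Ms ++ [Xt]) (Y0 :: Ns ++ [Yt]),
      (∃ j : ℕ, pr.1 = pow Q j) ∨ (∃ j : ℕ, pr.2 = pow Q j)) :
    editDist (X0 ++ (List.intersperse Q (Ms ++ [Q ++ Xt])).flatten)
        ((List.intersperse Q (Y0 :: Ns ++ [Yt])).flatten) ≤
      editDist ((List.intersperse Q (X0 :: Ms ++ [Xt])).flatten)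
        ((List.intersperse Q (Y0 :: Ns ++ [Yt])).flatten) := by
  have hNs : Ns ++ [Yt] ≠ [] := by simp
  have hY : ((List.intersperse Q (Y0 :: Ns ++ [Yt])).flatten) =
      Y0 ++ (Q ++ (List.intersperse Q (Ns ++ [Yt])).flatten) := by
    rw [show Y0 :: Ns ++ [Yt] = Y0 :: (Ns ++ [Yt]) from rfl,
      join_intersperse_cons Q Y0 _ hNs]
  have hblocks := ed_blocks Q Ms Ns hlen Xt Yt (fun pr hpr => hpow pr (by
    simp only [List.cons_append, List.zip_cons_cons, List.mem_cons]
    right; exact hpr))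
  calc editDist (X0 ++ (List.intersperse Q (Ms ++ [Q ++ Xt])).flatten)
        ((List.intersperse Q (Y0 :: Ns ++ [Yt])).flatten)
      = editDist (X0 ++ (List.intersperse Q (Ms ++ [Q ++ Xt])).flatten)
        (Y0 ++ (Q ++ (List.intersperse Q (Ns ++ [Yt])).flatten)) := by rw [hY]
    _ ≤ editDist X0 Y0 +
        editDist ((List.intersperse Q (Ms ++ [Q ++ Xt])).flatten)
          (Q ++ (List.intersperse Q (Ns ++ [Yt])).flatten) := ed_append _ _ _ _
    _ ≤ editDist X0 Y0 + (List.zipWith editDist (Ms ++ [Xt]) (Ns ++ [Yt])).sum := by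
        omega
    _ = (List.zipWith editDist (X0 :: Ms ++ [Xt]) (Y0 :: Ns ++ [Yt])).sum := by simp
    _ = editDist ((List.intersperse Q (X0 :: Ms ++ [Xt])).flatten)
        ((List.intersperse Q (Y0 :: Ns ++ [Yt])).flatten) := hsum.symm
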